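/- Let (X,d) be a sequentially Yoneda-complete T1 bounded quasi-metric space. Then the map φ : K_0(X) → CBX, φ(K) = K*, is a topological embedding (injective, continuous, and a homeomorphism onto its image) from K_0(X) equipped with the Vietoris topology into CBX equipped with the Scott topology. -/

import Mathlib

open scoped NNReal

/-! Generic sequence notions for an arbitrary "distance" function `ρ`. -/

def IsCauchySeq {α : Type _} (ρ : α → α → ℝ) (u : ℕ → α) : Prop :=
  ∀ ε : ℝ, 0 < ε → ∃ N, ∀ n m, N ≤ n → n ≤ m → ρ (u n) (u m) < ε

def IsBiCauchySeq {α : Type _} (ρ : α → α → ℝ) (u : ℕ → α) : Prop :=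
  ∀ ε : ℝ, 0 < ε → ∃ N, ∀ n m, N ≤ n → N ≤ m → ρ (u n) (u m) < ε

/-- `sup_{m ≥ n} ρ (u m) y`. -/
noncomputable def supTail {α : Type _} (ρ : α → α → ℝ) (u : ℕ → α) (y : α) (n : ℕ) : ℝ :=
  sSup {t | ∃ m, n ≤ m ∧ t = ρ (u m) y}

/-- `x` is a Yoneda limit of `u`:  `ρ x y = inf_n sup_{m ≥ n} ρ (u m) y` for all `y`. -/
def IsYonedaLim {α : Type _} (ρ : α → α → ℝ) (u : ℕ → α) (x : α) : Prop :=
  ∀ y, ρ x y = sInf (Set.range (supTail ρ u y))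

def SeqYonedaCompleteD {α : Type _} (ρ : α → α → ℝ) : Prop :=
  ∀ u, IsCauchySeq ρ u → ∃ x, IsYonedaLim ρ u x

/-- Smyth completeness: every Cauchy sequence converges in the symmetrized metric. -/
def SmythCompleteD {α : Type _} (ρ : α → α → ℝ) : Prop :=
  ∀ u, IsCauchySeq ρ u → ∃ x, ∀ ε : ℝ, 0 < ε → ∃ N, ∀ n, N ≤ n →
    max (ρ x (u n)) (ρ (u n) x) < ε

/-- `inf_{m ≥ n} ρ e (u m)`. -/
noncomputable def infTail {α : Type _} (ρ : α → α → ℝ) (u : ℕ → α) (e : α) (n : ℕ) : ℝ :=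
  sInf {t | ∃ m, n ≤ m ∧ t = ρ e (u m)}

/-- `e` is a finite point: for every Cauchy sequence `u` with Yoneda limit `x`,
`ρ e x = sup_n inf_{m ≥ n} ρ e (u m)`. -/
def IsFinitePoint {α : Type _} (ρ : α → α → ℝ) (e : α) : Prop :=
  ∀ u x, IsCauchySeq ρ u → IsYonedaLim ρ u x →
    ρ e x = sSup (Set.range (infTail ρ u e))

/-- ω-algebraic: a countable set of finite points such that every point is a Yoneda limit
of a Cauchy sequence of points from it. -/
def OmegaAlgebraicD {α : Type _} (ρ : α → α → ℝ) : Prop :=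
  ∃ X0 : Set α, X0.Countable ∧ (∀ e ∈ X0, IsFinitePoint ρ e) ∧
    ∀ x, ∃ u : ℕ → α, (∀ n, u n ∈ X0) ∧ IsCauchySeq ρ u ∧ IsYonedaLim ρ u x

/-- A quasi-metric on `X`. -/
structure QuasiMetric (X : Type _) : Type _ where
  d : X → X → ℝ
  nonneg : ∀ x y, 0 ≤ d x y
  triangle : ∀ x y z, d x z ≤ d x y + d y z
  eq_iff : ∀ x y, x = y ↔ d x y = 0 ∧ d y x = 0

/-- Formal balls over `X`. -/
abbrev FB (X : Type _) := X × ℝ≥0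

/-- Nonempty finite subsets of the space of formal balls. -/
def PFin (X : Type _) : Type _ := {F : Set (FB X) // F.Finite ∧ F.Nonempty}

namespace QuasiMetric

variable {X : Type _} (Q : QuasiMetric X)

def IsT1 : Prop := ∀ x y, Q.d x y = 0 → x = y

def Bounded : Prop := ∃ C : ℝ, ∀ x y, Q.d x y ≤ C

def ball (x : X) (ε : ℝ) : Set X := {y | Q.d x y < ε}

/-- The topology `τ_d` induced by the quasi-metric. -/
def tau : TopologicalSpace X :=
  TopologicalSpace.generateFrom {s | ∃ x ε, 0 < ε ∧ s = Q.ball x ε}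

def dstar (x y : X) : ℝ := max (Q.d x y) (Q.d y x)

def SeqYonedaComplete : Prop := SeqYonedaCompleteD Q.d

def SmythComplete : Prop := SmythCompleteD Q.d

/-- `K` is `d⁻¹`-precompact. -/
def dInvPrecompact (K : Set X) : Prop :=
  ∀ ε : ℝ, 0 < ε → ∃ F : Set X, F.Finite ∧ F ⊆ K ∧ ∀ k ∈ K, ∃ x ∈ F, Q.d k x < ε

/-- The nonempty compact subsets of `(X, τ_d)`. -/
def K0 : Set (Set X) := {K | K.Nonempty ∧ @IsCompact X Q.tau K}

noncomputable def dPtSet (x : X) (B : Set X) : ℝ := sInf {t | ∃ b ∈ B, t = Q.d x b}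

noncomputable def dSetPt (A : Set X) (y : X) : ℝ := sInf {t | ∃ a ∈ A, t = Q.d a y}

/-- The Hausdorff quasi-metric. -/
noncomputable def Hd (A B : Set X) : ℝ :=
  max (sSup {t | ∃ b ∈ B, t = Q.dSetPt A b}) (sSup {t | ∃ a ∈ A, t = Q.dPtSet a B})

/-- Order on formal balls: `(x,r) ⊑ (y,s)  ↔  d x y ≤ r - s`. -/
def ble (a b : FB X) : Prop := Q.d a.1 b.1 ≤ (a.2 : ℝ) - (b.2 : ℝ)

/-- Auxiliary relation: `(x,r) ≺ (y,s)  ↔  d x y < r - s`. -/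
def blt (a b : FB X) : Prop := Q.d a.1 b.1 < (a.2 : ℝ) - (b.2 : ℝ)

def iota (x : X) : FB X := (x, 0)

/-- The quasi-metric `q` on formal balls. -/
noncomputable def q (a b : FB X) : ℝ :=
  max (Q.d a.1 b.1) |(a.2 : ℝ) - (b.2 : ℝ)| + ((b.2 : ℝ) - (a.2 : ℝ))

/-- The Egli–Milner relation `≺_EM` on nonempty finite sets of formal balls. -/
def em (F G : PFin X) : Prop :=
  (∀ b ∈ G.1, ∃ a ∈ F.1, Q.blt a b) ∧ (∀ a ∈ F.1, ∃ b ∈ G.1, Q.blt a b)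

/-- The non-strict Egli–Milner relation `⊑_EM`. -/
def emLE (F G : PFin X) : Prop :=
  (∀ a ∈ F.1, ∃ b ∈ G.1, Q.ble a b) ∧ (∀ b ∈ G.1, ∃ a ∈ F.1, Q.ble a b)

/-- `rF = max { r : (x,r) ∈ F }`. -/
noncomputable def rF (F : PFin X) : ℝ := sSup {t | ∃ p ∈ F.1, t = (p.2 : ℝ)}

/-- `δ(F,G) = min {(r-s) - d x y : (x,r) ∈ F, (y,s) ∈ G, (x,r) ≺ (y,s)}`. -/
noncomputable def delta (F G : PFin X) : ℝ :=
  sInf {t | ∃ a ∈ F.1, ∃ b ∈ G.1, Q.blt a b ∧ t = ((a.2 : ℝ) - (b.2 : ℝ)) - Q.d a.1 b.1}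

/-- The Hausdorff quasi-metric `H_q` on `P_fin(BX)` induced by `q`. -/
noncomputable def Hq (F G : PFin X) : ℝ :=
  max (sSup {t | ∃ a ∈ F.1, t = sInf {s | ∃ b ∈ G.1, s = Q.q a b}})
      (sSup {t | ∃ b ∈ G.1, t = sInf {s | ∃ a ∈ F.1, s = Q.q a b}})

/-- ω-chains in `(P_fin(BX), ≺_EM)`; `c n` plays the role of `F_{n+1}`. -/
def Chain : Type _ := {c : ℕ → PFin X // ∀ n, Q.em (c n) (c (n + 1))}

def chainLE (c c' : Q.Chain) : Prop := ∀ n, ∃ m, Q.em (c.1 n) (c'.1 m)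

def chainEquiv (c c' : Q.Chain) : Prop := Q.chainLE c c' ∧ Q.chainLE c' c

lemma blt_trans {a b c : FB X} (h1 : Q.blt a b) (h2 : Q.blt b c) : Q.blt a c := by
  have h3 := Q.triangle a.1 b.1 c.1
  unfold blt at h1 h2 ⊢
  linarith

lemma em_trans {F G H : PFin X} (h1 : Q.em F G) (h2 : Q.em G H) : Q.em F H := by
  constructor
  · intro b hb
    obtain ⟨a, ha, hab⟩ := h2.1 b hb
    obtain ⟨a', ha', h'⟩ := h1.1 a ha
    exact ⟨a', ha', Q.blt_trans h' hab⟩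
  · intro a ha
    obtain ⟨b, hb, hab⟩ := h1.2 a ha
    obtain ⟨c, hc, hbc⟩ := h2.2 b hb
    exact ⟨c, hc, Q.blt_trans hab hbc⟩

lemma chainLE_refl (c : Q.Chain) : Q.chainLE c c := fun n => ⟨n + 1, c.2 n⟩

lemma chainLE_trans {a b c : Q.Chain} (h1 : Q.chainLE a b) (h2 : Q.chainLE b c) :
    Q.chainLE a c := by
  intro n
  obtain ⟨m, hm⟩ := h1 n
  obtain ⟨k, hk⟩ := h2 m
  exact ⟨k, Q.em_trans hm hk⟩

def chainSetoid : Setoid Q.Chain where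
  r := Q.chainEquiv
  iseqv := ⟨fun c => ⟨Q.chainLE_refl c, Q.chainLE_refl c⟩,
    fun h => ⟨h.2, h.1⟩,
    fun h1 h2 => ⟨Q.chainLE_trans h1.1 h2.1, Q.chainLE_trans h2.2 h1.2⟩⟩

/-- The ω-Plotkin domain `CBX`: equivalence classes of ω-chains in `(P_fin(BX), ≺_EM)`. -/
def CBX : Type _ := Quotient Q.chainSetoid

/-- The partial order of `CBX`. -/
def cbLE : Q.CBX → Q.CBX → Prop :=
  Quotient.lift₂ Q.chainLE (by
    intro a b a' b' ha hb
    have ha' : Q.chainEquiv a a' := ha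
    have hb' : Q.chainEquiv b b' := hb
    exact propext ⟨fun h => Q.chainLE_trans (Q.chainLE_trans ha'.2 h) hb'.1,
      fun h => Q.chainLE_trans (Q.chainLE_trans ha'.1 h) hb'.2⟩)

def chainWB (c c' : Q.Chain) : Prop := ∃ m, ∀ n, Q.em (c.1 n) (c'.1 m)

/-- The way-below relation of `CBX`. -/
def cbWB : Q.CBX → Q.CBX → Prop :=
  Quotient.lift₂ Q.chainWB (by
    intro a b a' b' ha hb
    have ha' : Q.chainEquiv a a' := ha
    have hb' : Q.chainEquiv b b' := hb
    apply propext
    constructor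
    · rintro ⟨m, hm⟩
      obtain ⟨k, hk⟩ := hb'.1 m
      refine ⟨k, fun n => ?_⟩
      obtain ⟨p, hp⟩ := ha'.2 n
      exact Q.em_trans hp (Q.em_trans (hm p) hk)
    · rintro ⟨m, hm⟩
      obtain ⟨k, hk⟩ := hb'.2 m
      refine ⟨k, fun n => ?_⟩
      obtain ⟨p, hp⟩ := ha'.1 n
      exact Q.em_trans hp (Q.em_trans (hm p) hk))

/-- The Scott topology of `CBX`, generated by the sets `↟I`. -/
def scottTop : TopologicalSpace Q.CBX :=
  TopologicalSpace.generateFrom {s | ∃ I : Q.CBX, s = {J | Q.cbWB I J}}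

def upSet (F : PFin X) : Set (FB X) := {b | ∃ a ∈ F.1, Q.ble a b}

/-- `I⁺ = ⋂_n ↑F_n` for a representing chain. -/
def Iplus (c : Q.Chain) : Set (FB X) := ⋂ n, Q.upSet (c.1 n)

noncomputable def IplusQ (I : Q.CBX) : Set (FB X) := Q.Iplus (Quotient.out I)

/-- `r̄ I = inf { rF : F occurs in some chain representing I }`. -/
noncomputable def rbar (I : Q.CBX) : ℝ :=
  sInf {t | ∃ c : Q.Chain, Quotient.mk Q.chainSetoid c = I ∧ ∃ n, t = rF (c.1 n)}

/-- `c` is a standard representation of `K`: `c n` (playing the role of `F_{n+1}`) is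
`{(x_i^j, 1/(n+1)) : 1 ≤ j ≤ n+1, 1 ≤ i ≤ m_j}` where the `x_i^j ∈ K` satisfy
`∀ y ∈ K, ∃ i, d (x_i^j) y < 1/(2 j²)`. -/
def IsStdRep (K : Set X) (c : Q.Chain) : Prop :=
  ∃ (m : ℕ → ℕ) (x : ℕ → ℕ → X),
    (∀ j i, 1 ≤ j → 1 ≤ i → i ≤ m j → x j i ∈ K) ∧
    (∀ j, 1 ≤ j → ∀ y ∈ K, ∃ i, 1 ≤ i ∧ i ≤ m j ∧ Q.d (x j i) y < 1 / (2 * (j : ℝ) ^ 2)) ∧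
    (∀ n : ℕ, (c.1 n).1 =
      {p : FB X | ∃ j i, 1 ≤ j ∧ j ≤ n + 1 ∧ 1 ≤ i ∧ i ≤ m j ∧
        p = (x j i, ((n : ℝ≥0) + 1)⁻¹)})

/-- `D` on representing chains: `sup_n inf_m H_q(F_n, G_m)`. -/
noncomputable def Dchain (c c' : Q.Chain) : ℝ :=
  sSup {t | ∃ n, t = sInf {s | ∃ m, s = Q.Hq (c.1 n) (c'.1 m)}}

/-- The quasi-metric `D` on `CBX`. -/
noncomputable def D (I J : Q.CBX) : ℝ := Q.Dchain (Quotient.out I) (Quotient.out J)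

/-- The topology induced by `D` on `CBX`. -/
def DTop : TopologicalSpace Q.CBX :=
  TopologicalSpace.generateFrom
    {s | ∃ (I : Q.CBX) (ε : ℝ), 0 < ε ∧ s = {J | Q.D I J < ε}}

/-- The hyperspace `K_0(X)` as a type. -/
def K0T : Type _ := {K : Set X // K.Nonempty ∧ @IsCompact X Q.tau K}

/-- The Vietoris topology on `K_0(X)`. -/
def vietoris : TopologicalSpace Q.K0T :=
  TopologicalSpace.generateFrom
    ({s | ∃ V : Set X, @IsOpen X Q.tau V ∧ s = {K : Q.K0T | (K.1 ∩ V).Nonempty}} ∪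
     {s | ∃ V : Set X, @IsOpen X Q.tau V ∧ s = {K : Q.K0T | K.1 ⊆ V}})

/-- The topology of the Hausdorff quasi-metric on `K_0(X)`. -/
def hdTop : TopologicalSpace Q.K0T :=
  TopologicalSpace.generateFrom
    {s | ∃ (K : Q.K0T) (ε : ℝ), 0 < ε ∧ s = {L : Q.K0T | Q.Hd K.1 L.1 < ε}}

/-- Round ideals of `(P_fin(BX), ≺_EM)`. -/
def IsRoundIdeal (I : Set (PFin X)) : Prop :=
  I.Nonempty ∧ (∀ F G : PFin X, Q.em F G → G ∈ I → F ∈ I) ∧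
  (∀ F ∈ I, ∀ G ∈ I, ∃ H ∈ I, Q.em F H ∧ Q.em G H)

end QuasiMetric

/-!
The levels of a standard representation `K*` are finite sets of formal balls of radius
`1/(n+1)` centred in `K` that approximate `K` from both sides, so `I ≪ K*` is witnessed by a
single level and only involves finitely many balls around points of `K`; it therefore persists
under Vietoris-small perturbations of `K`, which is continuity. Conversely, for a finite
`ρ/2`-net `P ⊆ K`, the chain of the formal balls `(x, ρ + 1/(n+1))`, `x ∈ P`, is way below `K*`,
and every `L` with that chain way below `L*` lies within distance `ρ` of `P` in both directions;
this turns the subbasic Vietoris neighbourhoods `◇V` and `□V` into Scott neighbourhoods.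
Injectivity uses `T₁`: a compact set contains every point `y` with `inf_{k ∈ K} d(k, y) = 0`.
-/

open Set TopologicalSpace
open scoped Topology

lemma one_div_two_mul_sq_le_inv_sub_inv (n : ℕ) :
    1 / (2 * ((n : ℝ) + 1) ^ 2) ≤ ((n : ℝ) + 1)⁻¹ - ((n : ℝ) + 1 + 1)⁻¹ := by
  rw [inv_sub_inv (by positivity) (by positivity), div_le_div_iff₀ (by positivity) (by positivity)]
  nlinarith

lemma Set.Finite.exists_pos_forall_le {ι : Type*} {s : Set ι} (hs : s.Finite) {f : ι → ℝ}
    (hf : ∀ i ∈ s, 0 < f i) : ∃ δ > 0, ∀ i ∈ s, δ ≤ f i := by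
  rcases s.eq_empty_or_nonempty with rfl | hne
  · exact ⟨1, one_pos, by simp⟩
  · obtain ⟨i, hi, hmin⟩ := exists_min_image s f hs hne
    exact ⟨f i, hf i hi, hmin⟩

lemma Set.Finite.exists_eq_image_Icc {α : Type*} [Nonempty α] {s : Set α} (hs : s.Finite) :
    ∃ (m : ℕ) (x : ℕ → α), s = x '' Icc 1 m := by
  obtain ⟨m, f, hf⟩ := hs.fin_embedding
  refine ⟨m, fun i => if h : i - 1 < m then f ⟨i - 1, h⟩ else Classical.arbitrary α, ?_⟩
  rw [← hf]
  ext y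
  constructor
  · rintro ⟨⟨k, hk⟩, rfl⟩
    exact ⟨k + 1, ⟨by omega, by omega⟩, by simp [hk]⟩
  · rintro ⟨i, ⟨hi₁, hi₂⟩, rfl⟩
    exact ⟨⟨i - 1, by omega⟩, by simp [show i - 1 < m by omega]⟩

namespace QuasiMetric

variable {X : Type*} (Q : QuasiMetric X)

lemma d_self (x : X) : Q.d x x = 0 := ((Q.eq_iff x x).1 rfl).1

lemma mem_ball_self {x : X} {ε : ℝ} (hε : 0 < ε) : x ∈ Q.ball x ε := by
  show Q.d x x < ε
  rwa [d_self]

lemma isOpen_ball (x : X) {ε : ℝ} (hε : 0 < ε) : IsOpen[Q.tau] (Q.ball x ε) :=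
  isOpen_generateFrom_of_mem ⟨x, ε, hε, rfl⟩

lemma exists_ball_subset_of_isOpen {V : Set X} (hV : IsOpen[Q.tau] V) {y : X} (hy : y ∈ V) :
    ∃ r > 0, Q.ball y r ⊆ V := by
  induction hV generalizing y with
  | basic s hs =>
    obtain ⟨x, ε, -, rfl⟩ := hs
    refine ⟨ε - Q.d x y, sub_pos.2 hy, fun z (hz : Q.d y z < _) => ?_⟩
    show Q.d x z < ε
    linarith [Q.triangle x y z]
  | univ => exact ⟨1, one_pos, subset_univ _⟩
  | inter s t _ _ ihs iht =>
    obtain ⟨r₁, hr₁, h₁⟩ := ihs hy.1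
    obtain ⟨r₂, hr₂, h₂⟩ := iht hy.2
    exact ⟨min r₁ r₂, lt_min hr₁ hr₂, fun z (hz : Q.d y z < _) =>
      ⟨h₁ (hz.trans_le (min_le_left _ _)), h₂ (hz.trans_le (min_le_right _ _))⟩⟩
  | sUnion S _ ih =>
    obtain ⟨s, hs, hys⟩ := hy
    obtain ⟨r, hr, h⟩ := ih s hs hys
    exact ⟨r, hr, h.trans (subset_sUnion_of_mem hs)⟩

section Compact

variable {K : Set X} (hK : @IsCompact X Q.tau K)
include hK

lemma exists_finite_cover_d_lt {r : X → ℝ} (hr : ∀ x ∈ K, 0 < r x) :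
    ∃ F ⊆ K, F.Finite ∧ ∀ y ∈ K, ∃ w ∈ F, Q.d w y < r w := by
  let := Q.tau
  obtain ⟨F, hFK, hF, hcov⟩ := hK.elim_finite_subcover_image
    (fun w hw => Q.isOpen_ball w (hr w hw)) fun y hy => mem_biUnion hy (Q.mem_ball_self (hr y hy))
  refine ⟨F, hFK, hF, fun y hy => ?_⟩
  obtain ⟨w, hw, hwy⟩ := mem_iUnion₂.1 (hcov hy)
  exact ⟨w, hw, hwy⟩

lemma exists_finite_net {ε : ℝ} (hε : 0 < ε) :
    ∃ F ⊆ K, F.Finite ∧ ∀ y ∈ K, ∃ x ∈ F, Q.d x y < ε :=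
  Q.exists_finite_cover_d_lt hK fun _ _ => hε

lemma exists_pos_cover_d_lt {r : X → ℝ} (hr : ∀ x ∈ K, 0 < r x) :
    ∃ δ > 0, ∀ y ∈ K, ∃ w ∈ K, Q.d w y < r w ∧ δ ≤ r w := by
  obtain ⟨F, hFK, hF, hcov⟩ := Q.exists_finite_cover_d_lt hK hr
  obtain ⟨δ, hδ, hδF⟩ := hF.exists_pos_forall_le fun w hw => hr w (hFK hw)
  refine ⟨δ, hδ, fun y hy => ?_⟩
  obtain ⟨w, hw, hwy⟩ := hcov y hy
  exact ⟨w, hFK hw, hwy, hδF w hw⟩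

lemma exists_pos_forall_ball_subset {V : Set X} (hV : IsOpen[Q.tau] V) (hKV : K ⊆ V) :
    ∃ δ > 0, ∀ x ∈ K, Q.ball x δ ⊆ V := by
  choose! R hR hRV using fun x (hx : x ∈ K) => Q.exists_ball_subset_of_isOpen hV (hKV hx)
  obtain ⟨δ, hδ, hcov⟩ := Q.exists_pos_cover_d_lt hK (r := fun x => R x / 2)
    fun x hx => half_pos (hR x hx)
  refine ⟨δ, hδ, fun x hx z (hz : Q.d x z < δ) => ?_⟩
  obtain ⟨w, hw, hwx, hδw⟩ := hcov x hx
  refine hRV w hw (?_ : Q.d w z < R w)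
  linarith [Q.triangle w x z]

lemma mem_of_forall_exists_d_lt (hT1 : Q.IsT1) {y : X}
    (h : ∀ ε > 0, ∃ k ∈ K, Q.d k y < ε) : y ∈ K := by
  by_contra hy
  have hpos : ∀ w ∈ K, 0 < Q.d w y / 2 := fun w hw =>
    half_pos ((Q.nonneg w y).lt_of_ne fun h0 => hy (hT1 w y h0.symm ▸ hw))
  obtain ⟨δ, hδ, hcov⟩ := Q.exists_pos_cover_d_lt hK hpos
  obtain ⟨k, hk, hky⟩ := h δ hδ
  obtain ⟨w, -, hwk, hδw⟩ := hcov k hk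
  linarith [Q.triangle w k y]

end Compact

lemma blt_mk_self {x : X} {r s : ℝ≥0} (h : (s : ℝ) < r) : Q.blt (x, r) (x, s) := by
  show Q.d x x < (r : ℝ) - s
  rw [d_self]
  linarith

def stdLevel (m : ℕ → ℕ) (x : ℕ → ℕ → X) (n : ℕ) : Set (FB X) :=
  {p | ∃ j i, 1 ≤ j ∧ j ≤ n + 1 ∧ 1 ≤ i ∧ i ≤ m j ∧ p = (x j i, ((n : ℝ≥0) + 1)⁻¹)}

lemma stdLevel_finite (m : ℕ → ℕ) (x : ℕ → ℕ → X) (n : ℕ) : (stdLevel m x n).Finite := by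
  refine (((finite_Icc 1 (n + 1)).prod (finite_Icc 1 ((Finset.range (n + 2)).sup m))).image
    fun ji : ℕ × ℕ => ((x ji.1 ji.2, ((n : ℝ≥0) + 1)⁻¹) : FB X)).subset ?_
  rintro p ⟨j, i, hj₁, hj₂, hi₁, hi₂, rfl⟩
  exact ⟨(j, i), ⟨⟨hj₁, hj₂⟩, hi₁, hi₂.trans (Finset.le_sup (Finset.mem_range.2 (by omega)))⟩, rfl⟩

section StdRep

variable {K : Set X} {m : ℕ → ℕ} {x : ℕ → ℕ → X}
  (hxK : ∀ j i, 1 ≤ j → 1 ≤ i → i ≤ m j → x j i ∈ K)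
  (hnet : ∀ j, 1 ≤ j → ∀ y ∈ K, ∃ i, 1 ≤ i ∧ i ≤ m j ∧ Q.d (x j i) y < 1 / (2 * (j : ℝ) ^ 2))
include hxK hnet

lemma em_of_stdLevel {F G : PFin X} {n : ℕ} (hF : F.1 = stdLevel m x n)
    (hG : G.1 = stdLevel m x (n + 1)) : Q.em F G := by
  have hgap := one_div_two_mul_sq_le_inv_sub_inv n
  have hgap_pos : 0 < ((n : ℝ) + 1)⁻¹ - ((n : ℝ) + 1 + 1)⁻¹ :=
    lt_of_lt_of_le (by positivity) hgap
  unfold em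
  rw [hF, hG]
  constructor
  · rintro b ⟨j, i, hj₁, hj₂, hi₁, hi₂, rfl⟩
    rcases (show j ≤ n + 1 ∨ j = n + 2 by omega) with hj | rfl
    · exact ⟨_, ⟨j, i, hj₁, hj, hi₁, hi₂, rfl⟩, Q.blt_mk_self (by push_cast; linarith)⟩
    · obtain ⟨i', hi'₁, hi'₂, hd⟩ := hnet (n + 1) (by omega) _ (hxK _ _ (by omega) hi₁ hi₂)
      refine ⟨_, ⟨n + 1, i', by omega, le_rfl, hi'₁, hi'₂, rfl⟩, ?_⟩
      show Q.d _ _ < _ - _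
      push_cast at hd ⊢
      linarith
  · rintro a ⟨j, i, hj₁, hj₂, hi₁, hi₂, rfl⟩
    exact ⟨_, ⟨j, i, hj₁, by omega, hi₁, hi₂, rfl⟩, Q.blt_mk_self (by push_cast; linarith)⟩

lemma exists_isStdRep_of_net (hK : K.Nonempty) :
    ∃ c : Q.Chain, Q.IsStdRep K c ∧ ∀ n, (c.1 n).1 = stdLevel m x n := by
  obtain ⟨i, hi₁, hi₂, -⟩ := hnet 1 le_rfl _ hK.some_mem
  let F : ℕ → PFin X := fun n =>
    ⟨stdLevel m x n, stdLevel_finite m x n, _, 1, i, le_rfl, by omega, hi₁, hi₂, rfl⟩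
  exact ⟨⟨F, fun n => Q.em_of_stdLevel hxK hnet rfl rfl⟩, ⟨m, x, hxK, hnet, fun n => rfl⟩,
    fun n => rfl⟩

end StdRep

namespace IsStdRep

variable {Q} {K : Set X} {c : Q.Chain} (hc : Q.IsStdRep K c)
include hc

lemma fst_mem {n : ℕ} {p : FB X} (hp : p ∈ (c.1 n).1) : p.1 ∈ K := by
  obtain ⟨m, x, hxK, -, hlev⟩ := hc
  rw [hlev] at hp
  obtain ⟨j, i, hj₁, -, hi₁, hi₂, rfl⟩ := hp
  exact hxK j i hj₁ hi₁ hi₂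

lemma coe_snd {n : ℕ} {p : FB X} (hp : p ∈ (c.1 n).1) : (p.2 : ℝ) = ((n : ℝ) + 1)⁻¹ := by
  obtain ⟨m, x, -, -, hlev⟩ := hc
  rw [hlev] at hp
  obtain ⟨j, i, -, -, -, -, rfl⟩ := hp
  push_cast
  rfl

lemma exists_near (n : ℕ) {y : X} (hy : y ∈ K) :
    ∃ p ∈ (c.1 n).1, Q.d p.1 y < 1 / (2 * ((n : ℝ) + 1) ^ 2) := by
  obtain ⟨m, x, -, hnet, hlev⟩ := hc
  obtain ⟨i, hi₁, hi₂, hd⟩ := hnet (n + 1) (by omega) y hy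
  refine ⟨(x (n + 1) i, ((n : ℝ≥0) + 1)⁻¹), ?_, by exact_mod_cast hd⟩
  rw [hlev]
  exact ⟨n + 1, i, by omega, le_rfl, hi₁, hi₂, rfl⟩

end IsStdRep

lemma exists_isStdRep {K : Set X} (hK : K.Nonempty) (hKc : @IsCompact X Q.tau K) {A : Set X}
    (hA : A.Finite) (hAK : A ⊆ K) :
    ∃ c : Q.Chain, Q.IsStdRep K c ∧ ∀ n, ∀ a ∈ A, (a, ((n : ℝ≥0) + 1)⁻¹) ∈ (c.1 n).1 := by
  have : Nonempty X := ⟨hK.some⟩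
  choose T hTK hT hTnet using fun j : ℕ =>
    Q.exists_finite_net hKc (ε := 1 / (2 * ((j : ℝ) + 1) ^ 2)) (by positivity)
  -- the `j`-th family of centres enumerates `A ∪ T (j - 1)`, a `1 / (2 j²)`-net of `K`
  choose m x hmx using fun j : ℕ => (hA.union (hT (j - 1))).exists_eq_image_Icc
  have hxS : ∀ j i, 1 ≤ i → i ≤ m j → x j i ∈ A ∪ T (j - 1) := fun j i hi₁ hi₂ => by
    rw [hmx j]
    exact mem_image_of_mem _ ⟨hi₁, hi₂⟩
  have hSx : ∀ j, ∀ z ∈ A ∪ T (j - 1), ∃ i, 1 ≤ i ∧ i ≤ m j ∧ x j i = z := fun j z hz => by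
    rw [hmx j] at hz
    obtain ⟨i, ⟨hi₁, hi₂⟩, rfl⟩ := hz
    exact ⟨i, hi₁, hi₂, rfl⟩
  have hxK : ∀ j i, 1 ≤ j → 1 ≤ i → i ≤ m j → x j i ∈ K := fun j i _ hi₁ hi₂ =>
    (hxS j i hi₁ hi₂).elim (fun h => hAK h) fun h => hTK _ h
  obtain ⟨c, hc, hlev⟩ := Q.exists_isStdRep_of_net hxK (fun j hj y hy => by
    obtain ⟨k, rfl⟩ := Nat.exists_eq_add_of_le' hj
    obtain ⟨z, hz, hzy⟩ := hTnet k y hy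
    obtain ⟨i, hi₁, hi₂, rfl⟩ := hSx (k + 1) z (Or.inr hz)
    exact ⟨i, hi₁, hi₂, by push_cast; exact hzy⟩) hK
  refine ⟨c, hc, fun n a ha => ?_⟩
  obtain ⟨i, hi₁, hi₂, rfl⟩ := hSx 1 a (Or.inl ha)
  rw [hlev]
  exact ⟨1, i, le_rfl, by omega, hi₁, hi₂, rfl⟩

noncomputable section BallsChain

variable {P : Set X} (hP : P.Finite) (hne : P.Nonempty)

def ballsAt (r : ℝ≥0) : PFin X := ⟨(·, r) '' P, hP.image _, hne.image _⟩

lemma em_ballsAt {r s : ℝ≥0} (h : (s : ℝ) < r) : Q.em (ballsAt hP hne r) (ballsAt hP hne s) :=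
  ⟨by rintro _ ⟨x, hx, rfl⟩; exact ⟨_, ⟨x, hx, rfl⟩, Q.blt_mk_self h⟩,
    by rintro _ ⟨x, hx, rfl⟩; exact ⟨_, ⟨x, hx, rfl⟩, Q.blt_mk_self h⟩⟩

/-- An ω-chain whose supremum in `CBX` is the finite set of formal balls `{(x, ρ) : x ∈ P}`. -/
def ballsChain (ρ : ℝ≥0) : Q.Chain :=
  ⟨fun n => ballsAt hP hne (ρ + ((n : ℝ≥0) + 1)⁻¹), fun n => Q.em_ballsAt hP hne (by
    push_cast
    gcongr
    linarith)⟩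

variable {Q} {K : Set X} {c : Q.Chain} (hc : Q.IsStdRep K c) {ρ : ℝ≥0}
include hc

lemma chainWB_ballsChain (hPc : ∀ n, ∀ x ∈ P, (x, ((n : ℝ≥0) + 1)⁻¹) ∈ (c.1 n).1)
    (hnet : ∀ k ∈ K, ∃ x ∈ P, Q.d x k < ρ / 2) : Q.chainWB (Q.ballsChain hP hne ρ) c := by
  have hρ : 0 < (ρ : ℝ) := by
    obtain ⟨x, hx⟩ := hne
    obtain ⟨y, -, hy⟩ := hnet x (hc.fst_mem (hPc 0 x hx))
    linarith [Q.nonneg y x]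
  obtain ⟨m, hm⟩ := exists_nat_one_div_lt (half_pos hρ)
  rw [one_div] at hm
  refine ⟨m, fun n => ⟨fun b hb => ?_, ?_⟩⟩
  · obtain ⟨x, hx, hxb⟩ := hnet b.1 (hc.fst_mem hb)
    refine ⟨_, ⟨x, hx, rfl⟩, ?_⟩
    show Q.d x b.1 < _ - (b.2 : ℝ)
    rw [hc.coe_snd hb]
    push_cast
    linarith [inv_pos.2 (n.cast_add_one_pos (α := ℝ))]
  · rintro _ ⟨x, hx, rfl⟩
    refine ⟨_, hPc m x hx, Q.blt_mk_self ?_⟩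
    push_cast
    linarith [inv_pos.2 (n.cast_add_one_pos (α := ℝ))]

lemma forall_exists_d_lt_of_chainWB_ballsChain (h : Q.chainWB (Q.ballsChain hP hne ρ) c) :
    (∀ x ∈ P, ∃ z ∈ K, Q.d x z < ρ) ∧ ∀ w ∈ K, ∃ x ∈ P, Q.d x w < ρ := by
  obtain ⟨m, hm⟩ := h
  refine ⟨fun x hx => ?_, fun w hw => ?_⟩
  · obtain ⟨b, hb, hxb⟩ := (hm m).2 _ ⟨x, hx, rfl⟩
    refine ⟨b.1, hc.fst_mem hb, ?_⟩
    have hxb : Q.d x b.1 < _ - (b.2 : ℝ) := hxb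
    rw [hc.coe_snd hb] at hxb
    push_cast at hxb
    linarith
  · obtain ⟨p, hp, hpw⟩ := hc.exists_near m hw
    obtain ⟨_, ⟨x, hx, rfl⟩, hxp⟩ := (hm (m + 1)).1 p hp
    refine ⟨x, hx, ?_⟩
    have hxp : Q.d x p.1 < _ - (p.2 : ℝ) := hxp
    rw [hc.coe_snd hp] at hxp
    push_cast at hxp
    linarith [Q.triangle x p.1 w, one_div_two_mul_sq_le_inv_sub_inv m]

end BallsChain

lemma exists_isStdRep_em_of_near {K L : Set X} {cK : Q.Chain} (hcK : Q.IsStdRep K cK) (m : ℕ)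
    (hLc : @IsCompact X Q.tau L)
    (hLsub : ∀ w ∈ L, ∃ p ∈ (cK.1 m).1, Q.d p.1 w < ((m : ℝ) + 1)⁻¹ - ((m : ℝ) + 1 + 1)⁻¹)
    (hLmeets : ∀ p ∈ (cK.1 m).1, ∃ w ∈ L, Q.d p.1 w < ((m : ℝ) + 1)⁻¹ - ((m : ℝ) + 1 + 1)⁻¹) :
    ∃ cL : Q.Chain, Q.IsStdRep L cL ∧ Q.em (cK.1 m) (cL.1 (m + 1)) := by
  obtain ⟨p₀, hp₀⟩ := (cK.1 m).2.2
  have : Nonempty X := ⟨p₀.1⟩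
  choose! f hfL hf using hLmeets
  obtain ⟨cL, hcL, hfc⟩ := Q.exists_isStdRep ⟨f p₀, hfL p₀ hp₀⟩ hLc
    ((cK.1 m).2.1.image f) (image_subset_iff.2 hfL)
  refine ⟨cL, hcL, fun b hb => ?_, fun a ha => ?_⟩
  · obtain ⟨p, hp, hpb⟩ := hLsub b.1 (hcL.fst_mem hb)
    refine ⟨p, hp, ?_⟩
    show Q.d p.1 b.1 < (p.2 : ℝ) - b.2
    rw [hcK.coe_snd hp, hcL.coe_snd hb]
    push_cast
    exact hpb
  · refine ⟨_, hfc (m + 1) (f a) (mem_image_of_mem f ha), ?_⟩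
    show Q.d a.1 (f a) < (a.2 : ℝ) - _
    rw [hcK.coe_snd ha]
    push_cast
    exact hf a ha

lemma subset_of_chainLE (hT1 : Q.IsT1) {K L : Set X} (hK : @IsCompact X Q.tau K)
    {cK cL : Q.Chain} (hcK : Q.IsStdRep K cK) (hcL : Q.IsStdRep L cL) (hle : Q.chainLE cK cL) :
    L ⊆ K := by
  intro w hw
  refine Q.mem_of_forall_exists_d_lt hK hT1 fun ε hε => ?_
  obtain ⟨n, hn⟩ := exists_nat_one_div_lt hε
  obtain ⟨m, hm⟩ := hle n
  obtain ⟨p, hp, hpw⟩ := hcL.exists_near m hw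
  obtain ⟨a, ha, hap⟩ := hm.1 p hp
  refine ⟨a.1, hcK.fst_mem ha, ?_⟩
  have hap : Q.d a.1 p.1 < (a.2 : ℝ) - p.2 := hap
  rw [hcK.coe_snd ha, hcL.coe_snd hp] at hap
  rw [one_div] at hn
  have : (0 : ℝ) < ((m : ℝ) + 1 + 1)⁻¹ := by positivity
  linarith [Q.triangle a.1 p.1 w, one_div_two_mul_sq_le_inv_sub_inv m]

section Embedding

lemma isOpen_vietoris_meets {V : Set X} (hV : IsOpen[Q.tau] V) :
    IsOpen[Q.vietoris] {K : Q.K0T | (K.1 ∩ V).Nonempty} :=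
  isOpen_generateFrom_of_mem (Or.inl ⟨V, hV, rfl⟩)

lemma isOpen_vietoris_subset {V : Set X} (hV : IsOpen[Q.tau] V) :
    IsOpen[Q.vietoris] {K : Q.K0T | K.1 ⊆ V} :=
  isOpen_generateFrom_of_mem (Or.inr ⟨V, hV, rfl⟩)

lemma exists_isStdRep_K0T (K : Q.K0T) : ∃ c : Q.Chain, Q.IsStdRep K.1 c :=
  (Q.exists_isStdRep K.2.1 K.2.2 finite_empty (empty_subset _)).imp fun _ h => h.1

variable {φ : Q.K0T → Q.CBX}

lemma isOpen_induced_of_forall_exists_cbWB {S : Set Q.K0T}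
    (h : ∀ K ∈ S, ∃ I, Q.cbWB I (φ K) ∧ ∀ L, Q.cbWB I (φ L) → L ∈ S) :
    IsOpen[induced φ Q.scottTop] S := by
  let := induced φ Q.scottTop
  refine isOpen_iff_forall_mem_open.2 fun K hK => ?_
  obtain ⟨I, hKI, hI⟩ := h K hK
  exact ⟨φ ⁻¹' {J | Q.cbWB I J}, hI,
    isOpen_induced (t := Q.scottTop) (isOpen_generateFrom_of_mem ⟨I, rfl⟩), hKI⟩

variable (hφ : ∀ (K : Q.K0T) (c : Q.Chain), Q.IsStdRep K.1 c → φ K = Quotient.mk Q.chainSetoid c)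
include hφ

lemma cbWB_mk_iff {K : Q.K0T} {c : Q.Chain} (hc : Q.IsStdRep K.1 c) (c' : Q.Chain) :
    Q.cbWB (Quotient.mk _ c') (φ K) ↔ Q.chainWB c' c := by
  rw [hφ K c hc]
  rfl

lemma injective_of_isStdRep (hT1 : Q.IsT1) : Function.Injective φ := by
  intro K L hKL
  obtain ⟨cK, hcK⟩ := Q.exists_isStdRep_K0T K
  obtain ⟨cL, hcL⟩ := Q.exists_isStdRep_K0T L
  have hE : Q.chainEquiv cK cL :=
    Quotient.exact (s := Q.chainSetoid) (by rw [← hφ K cK hcK, ← hφ L cL hcL, hKL])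
  exact Subtype.ext ((Q.subset_of_chainLE hT1 L.2.2 hcL hcK hE.2).antisymm
    (Q.subset_of_chainLE hT1 K.2.2 hcK hcL hE.1))

lemma isOpen_vietoris_preimage_cbWB (I : Q.CBX) : IsOpen[Q.vietoris] {K | Q.cbWB I (φ K)} := by
  induction I using Quotient.inductionOn with | h cI => ?_
  let := Q.tau
  let := Q.vietoris
  rw [isOpen_iff_forall_mem_open]
  intro K hK
  obtain ⟨cK, hcK⟩ := Q.exists_isStdRep_K0T K
  obtain ⟨m, hm⟩ := (Q.cbWB_mk_iff hφ hcK cI).1 hK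
  set ε := ((m : ℝ) + 1)⁻¹ - ((m : ℝ) + 1 + 1)⁻¹
  have hgap : 1 / (2 * ((m : ℝ) + 1) ^ 2) ≤ ε := one_div_two_mul_sq_le_inv_sub_inv m
  have hε : 0 < ε := lt_of_lt_of_le (by positivity) hgap
  refine ⟨{L | L.1 ⊆ ⋃ p ∈ (cK.1 m).1, Q.ball p.1 ε} ∩
    ⋂ p ∈ (cK.1 m).1, {L | (L.1 ∩ Q.ball p.1 ε).Nonempty}, fun L ⟨hLsub, hLmeets⟩ => ?_, ?_, ?_⟩
  · obtain ⟨cL, hcL, hem⟩ := Q.exists_isStdRep_em_of_near hcK m L.2.2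
      (fun w hw => by obtain ⟨p, hp, hpw⟩ := mem_iUnion₂.1 (hLsub hw); exact ⟨p, hp, hpw⟩)
      (fun p hp => mem_iInter₂.1 hLmeets p hp)
    exact (Q.cbWB_mk_iff hφ hcL cI).2 ⟨m + 1, fun n => Q.em_trans (hm n) hem⟩
  · exact (Q.isOpen_vietoris_subset (isOpen_biUnion fun p _ => Q.isOpen_ball p.1 hε)).inter
      ((cK.1 m).2.1.isOpen_biInter fun p _ => Q.isOpen_vietoris_meets (Q.isOpen_ball p.1 hε))
  · refine ⟨fun w hw => ?_, mem_iInter₂.2 fun p hp => ⟨p.1, hcK.fst_mem hp, Q.mem_ball_self hε⟩⟩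
    obtain ⟨p, hp, hpw⟩ := hcK.exists_near m hw
    exact mem_biUnion hp (hpw.trans_le hgap)

lemma cbWB_ballsChain {K : Q.K0T} {P : Set X} (hP : P.Finite) (hne : P.Nonempty) (hPK : P ⊆ K.1)
    {ρ : ℝ≥0} (hnet : ∀ k ∈ K.1, ∃ x ∈ P, Q.d x k < ρ / 2) :
    Q.cbWB (Quotient.mk _ (Q.ballsChain hP hne ρ)) (φ K) := by
  obtain ⟨c, hc, hPc⟩ := Q.exists_isStdRep K.2.1 K.2.2 hP hPK
  exact (Q.cbWB_mk_iff hφ hc _).2 (chainWB_ballsChain hP hne hc hPc hnet)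

lemma forall_exists_d_lt_of_cbWB_ballsChain {L : Q.K0T} {P : Set X} (hP : P.Finite)
    (hne : P.Nonempty) {ρ : ℝ≥0} (h : Q.cbWB (Quotient.mk _ (Q.ballsChain hP hne ρ)) (φ L)) :
    (∀ x ∈ P, ∃ z ∈ L.1, Q.d x z < ρ) ∧ ∀ w ∈ L.1, ∃ x ∈ P, Q.d x w < ρ := by
  obtain ⟨c, hc⟩ := Q.exists_isStdRep_K0T L
  exact forall_exists_d_lt_of_chainWB_ballsChain hP hne hc ((Q.cbWB_mk_iff hφ hc _).1 h)

lemma isOpen_induced_meets {V : Set X} (hV : IsOpen[Q.tau] V) :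
    IsOpen[induced φ Q.scottTop] {K : Q.K0T | (K.1 ∩ V).Nonempty} := by
  refine Q.isOpen_induced_of_forall_exists_cbWB fun K ⟨y, hyK, hyV⟩ => ?_
  obtain ⟨r, hr, hrV⟩ := Q.exists_ball_subset_of_isOpen hV hyV
  obtain ⟨P, hPK, hP, hPnet⟩ := Q.exists_finite_net K.2.2 (half_pos hr)
  refine ⟨_, Q.cbWB_ballsChain hφ (hP.insert y) (insert_nonempty y P) (insert_subset hyK hPK)
    (ρ := ⟨r, hr.le⟩) fun k hk => ?_, fun L hL => ?_⟩
  · obtain ⟨x, hx, hxk⟩ := hPnet k hk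
    exact ⟨x, mem_insert_of_mem y hx, hxk⟩
  · obtain ⟨z, hzL, hz⟩ := (Q.forall_exists_d_lt_of_cbWB_ballsChain hφ _ _ hL).1 y (mem_insert y P)
    exact ⟨z, hzL, hrV hz⟩

lemma isOpen_induced_subset {V : Set X} (hV : IsOpen[Q.tau] V) :
    IsOpen[induced φ Q.scottTop] {K : Q.K0T | K.1 ⊆ V} := by
  refine Q.isOpen_induced_of_forall_exists_cbWB fun K hKV => ?_
  obtain ⟨δ, hδ, hδV⟩ := Q.exists_pos_forall_ball_subset K.2.2 hV hKV
  obtain ⟨P, hPK, hP, hPnet⟩ := Q.exists_finite_net K.2.2 (half_pos hδ)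
  obtain ⟨k, hk⟩ := K.2.1
  obtain ⟨x₀, hx₀, -⟩ := hPnet k hk
  refine ⟨_, Q.cbWB_ballsChain hφ hP ⟨x₀, hx₀⟩ hPK (ρ := ⟨δ, hδ.le⟩) hPnet, fun L hL w hw => ?_⟩
  obtain ⟨x, hx, hxw⟩ := (Q.forall_exists_d_lt_of_cbWB_ballsChain hφ _ _ hL).2 w hw
  exact hδV x (hPK hx) hxw

lemma vietoris_eq_induced : Q.vietoris = induced φ Q.scottTop := by
  refine le_antisymm (continuous_iff_le_induced.1 (continuous_generateFrom_iff.2 ?_))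
    (le_generateFrom ?_)
  · rintro _ ⟨I, rfl⟩
    exact Q.isOpen_vietoris_preimage_cbWB hφ I
  · rintro _ (⟨V, hV, rfl⟩ | ⟨V, hV, rfl⟩)
    exacts [Q.isOpen_induced_meets hφ hV, Q.isOpen_induced_subset hφ hV]

end Embedding

end QuasiMetric

theorem stmt9_general {X : Type} (Q : QuasiMetric X) (hT1 : Q.IsT1) (φ : Q.K0T → Q.CBX)
    (hφ : ∀ (K : Q.K0T) (c : Q.Chain), Q.IsStdRep K.1 c →
      φ K = Quotient.mk Q.chainSetoid c) :
    Function.Injective φ ∧ (@Continuous _ _ Q.vietoris Q.scottTop φ) ∧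
      Q.vietoris = TopologicalSpace.induced φ Q.scottTop := by
  have h := Q.vietoris_eq_induced hφ
  exact ⟨Q.injective_of_isStdRep hφ hT1, continuous_iff_le_induced.2 h.le, h⟩

/-- `φ(K) = K*` is a topological embedding of `(K_0(X), τ_V)` into
`(CBX, σ)`: injective, continuous, and inducing (hence a homeomorphism onto its image). -/
theorem stmt9 {X : Type} (Q : QuasiMetric X) (hT1 : Q.IsT1) (hB : Q.Bounded)
    (hY : Q.SeqYonedaComplete) (φ : Q.K0T → Q.CBX)
    (hφ : ∀ (K : Q.K0T) (c : Q.Chain), Q.IsStdRep K.1 c →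
      φ K = Quotient.mk Q.chainSetoid c) :
    Function.Injective φ ∧ (@Continuous _ _ Q.vietoris Q.scottTop φ) ∧
      Q.vietoris = TopologicalSpace.induced φ Q.scottTop :=
  stmt9_general Q hT1 φ hφ
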